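/- arXiv:2402.11682 — 2 statements merged into one kernel-verified Lean document; each statement's English description precedes it below -/
import Mathlib

section
/- Equivalence of the supremum form and the classification-error form of the empirical H-divergence (Ben-David's empirical estimate): if H is symmetric, i.e., closed under Boolean complement (h ∈ H implies the function x ↦ !(h x) is in H), then max_{h ∈ H} |P̂_S[h = true] − P̂_T[h = true]| = 1 − min_{h ∈ H} êrr(h); equivalently d̂_H(S, T) = 2 * max_{h ∈ H} |P̂_S[h = true] − P̂_T[h = true]|. -/
/-!
For nonempty samples, `1 - êrr(h) = P̂_S[h = true] - P̂_T[h = true]`, and replacing `h` by its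
complement negates this gap. Hence over a symmetric `H` the maximum of the absolute gap equals the
maximum of the gap itself, which is `1 - min_{h ∈ H} êrr(h)`.
-/

/-- Empirical probability that hypothesis `h` outputs `true` on the sample multiset `S`. -/
noncomputable def pTrue {X : Type*} (S : Multiset X) (h : X → Bool) : ℝ :=
  ((S.countP (fun x => h x = true) : ℕ) : ℝ) / (S.card : ℝ)

/-- Empirical probability that hypothesis `h` outputs `false` on the sample multiset `S`. -/
noncomputable def pFalse {X : Type*} (S : Multiset X) (h : X → Bool) : ℝ :=
  ((S.countP (fun x => h x = false) : ℕ) : ℝ) / (S.card : ℝ)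

/-- Combined empirical error of `h`: `P̂_S[h = false] + P̂_T[h = true]`. -/
noncomputable def empErr {X : Type*} (S T : Multiset X) (h : X → Bool) : ℝ :=
  pFalse S h + pTrue T h

/-- Empirical H-divergence: `d̂_H(S, T) = 2 * (1 − min_{h ∈ H} êrr(h))`. -/
noncomputable def empHDiv {X : Type*} (S T : Multiset X)
    (H : Finset (X → Bool)) (hH : H.Nonempty) : ℝ :=
  2 * (1 - H.inf' hH (fun h => empErr S T h))

namespace Finset

variable {ι α : Type*} [AddCommGroup α] [LinearOrder α]

theorem sub_inf' [IsOrderedAddMonoid α] (s : Finset ι) (hs : s.Nonempty) (f : ι → α) (a : α) :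
    a - s.inf' hs f = s.sup' hs (fun i => a - f i) := by
  obtain ⟨i, hi, hmin⟩ := s.exists_mem_eq_inf' hs f
  refine le_antisymm ?_ (sup'_le _ _ fun j hj => sub_le_sub_left (inf'_le f hj) a)
  rw [hmin]
  exact le_sup' (fun i => a - f i) hi

theorem sup'_abs_eq_sup'_of_neg_mem (s : Finset ι) (hs : s.Nonempty) (f : ι → α)
    (hneg : ∀ i ∈ s, ∃ j ∈ s, f j = -f i) :
    s.sup' hs (fun i => |f i|) = s.sup' hs f := by
  refine le_antisymm (sup'_le _ _ fun i hi => abs_le'.mpr ⟨le_sup' f hi, ?_⟩)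
    (sup'_mono_fun fun i _ => le_abs_self (f i))
  obtain ⟨j, hj, hfj⟩ := hneg i hi
  exact hfj ▸ le_sup' f hj

end Finset

section Empirical

variable {X : Type*} (S T : Multiset X) (h : X → Bool)

theorem pFalse_eq_one_sub_pTrue (hS : S ≠ 0) : pFalse S h = 1 - pTrue S h := by
  have hcard : (S.card : ℝ) ≠ 0 := by exact_mod_cast (Multiset.card_pos.mpr hS).ne'
  have hsplit := Multiset.card_eq_countP_add_countP (fun x => h x = true) S
  simp only [Bool.not_eq_true] at hsplit
  rw [pFalse, pTrue, eq_sub_iff_add_eq, ← add_div, div_eq_one_iff_eq hcard]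
  exact_mod_cast (hsplit.trans (add_comm _ _)).symm

theorem pTrue_not : pTrue S (fun x => !(h x)) = pFalse S h := by
  simp only [pTrue, pFalse, Bool.not_eq_true']

theorem pTrue_not_sub_pTrue_not (hS : S ≠ 0) (hT : T ≠ 0) :
    pTrue S (fun x => !(h x)) - pTrue T (fun x => !(h x)) = -(pTrue S h - pTrue T h) := by
  rw [pTrue_not, pTrue_not, pFalse_eq_one_sub_pTrue S h hS, pFalse_eq_one_sub_pTrue T h hT]
  ring

theorem one_sub_empErr (hS : S ≠ 0) : 1 - empErr S T h = pTrue S h - pTrue T h := by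
  rw [empErr, pFalse_eq_one_sub_pTrue S h hS]
  ring

end Empirical

/-- Equivalence of the supremum form and the classification-error form of the empirical
H-divergence: if `H` is symmetric (closed under Boolean complement), then
`max_{h ∈ H} |P̂_S[h = true] − P̂_T[h = true]| = 1 − min_{h ∈ H} êrr(h)`; equivalently,
`d̂_H(S, T) = 2 * max_{h ∈ H} |P̂_S[h = true] − P̂_T[h = true]|`. -/
theorem empHDiv_eq_sup_form_of_symmetric {X : Type*}
    (S T : Multiset X) (hS : S ≠ 0) (hT : T ≠ 0)
    (H : Finset (X → Bool)) (hH : H.Nonempty)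
    (hsymm : ∀ h ∈ H, (fun x => !(h x)) ∈ H) :
    H.sup' hH (fun h => |pTrue S h - pTrue T h|)
      = 1 - H.inf' hH (fun h => empErr S T h) ∧
    empHDiv S T H hH = 2 * H.sup' hH (fun h => |pTrue S h - pTrue T h|) := by
  have hsup : H.sup' hH (fun h => |pTrue S h - pTrue T h|)
      = 1 - H.inf' hH (fun h => empErr S T h) := by
    rw [H.sup'_abs_eq_sup'_of_neg_mem hH _ fun h hh =>
        ⟨_, hsymm h hh, pTrue_not_sub_pTrue_not S T h hS hT⟩, Finset.sub_inf']
    exact H.sup'_congr hH rfl fun h _ => (one_sub_empErr S T h hS).symm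
  exact ⟨hsup, by rw [empHDiv, hsup]⟩
end

section
/- Consistency probability bound for a bad hypothesis: let h : X → Bool be measurable, let ε be a real number with 0 ≤ ε ≤ 1, and let m : ℕ. If err(h) ≥ ε, then the probability under μ^{⊗m} of the event {s : Fin m → X | ∀ i, h (s i) = c (s i)} (h is consistent with all m i.i.d. samples) is at most (1 − ε)^m. -/
open MeasureTheory

/-- True error of hypothesis `h` with respect to target concept `c` under distribution `μ`. -/
noncomputable def trueErr {X : Type*} [MeasurableSpace X]
    (μ : Measure X) (c h : X → Bool) : ℝ :=
  (μ {x | h x ≠ c x}).toReal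

/-! The event that `h` is consistent with all `m` samples is the box `A^m`, where `A` is the
agreement set `{h = c}`, so its probability is `μ(A)^m`; and `μ(A) = 1 - err(h) ≤ 1 - ε`. -/

lemma MeasureTheory.Measure.pi_univ_pi_const {X : Type*} [MeasurableSpace X]
    (μ : Measure X) [SigmaFinite μ] (m : ℕ) (A : Set X) :
    Measure.pi (fun _ : Fin m => μ) (Set.univ.pi fun _ => A) = μ A ^ m := by
  simp [Measure.pi_pi]

lemma setOf_forall_eq_univ_pi {X : Type*} (m : ℕ) (c h : X → Bool) :
    {s : Fin m → X | ∀ i, h (s i) = c (s i)} = Set.univ.pi fun _ => {x | h x = c x} := by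
  ext s
  simp [Set.mem_pi]

lemma measureReal_agree_eq_one_sub_trueErr {X : Type*} [MeasurableSpace X]
    (μ : Measure X) [IsProbabilityMeasure μ] {c h : X → Bool}
    (hc : Measurable c) (hh : Measurable h) :
    μ.real {x | h x = c x} = 1 - trueErr μ c h := by
  have hdisagree : MeasurableSet {x | h x ≠ c x} := (measurableSet_eq_fun hh hc).compl
  simpa [trueErr, Set.compl_ofPred, measureReal_def] using probReal_compl_eq_one_sub hdisagree

theorem consistent_prob_le_of_bad_general {X : Type*} [MeasurableSpace X]
    (μ : Measure X) [IsProbabilityMeasure μ]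
    (c : X → Bool) (hc : Measurable c) (h : X → Bool) (hh : Measurable h)
    (ε : ℝ) (m : ℕ)
    (hbad : ε ≤ trueErr μ c h) :
    ((Measure.pi fun _ : Fin m => μ)
        {s : Fin m → X | ∀ i : Fin m, h (s i) = c (s i)}).toReal ≤ (1 - ε) ^ m := by
  have hagree : μ.real {x | h x = c x} ≤ 1 - ε := by
    rw [measureReal_agree_eq_one_sub_trueErr μ hc hh]
    linarith
  rw [setOf_forall_eq_univ_pi, Measure.pi_univ_pi_const, ENNReal.toReal_pow]
  exact pow_le_pow_left₀ measureReal_nonneg hagree m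

/-- Consistency probability bound for a bad hypothesis: if `err(h) ≥ ε`, then the
probability (under `m` i.i.d. draws from `μ`) that `h` is consistent with all `m`
samples is at most `(1 − ε)^m`. -/
theorem consistent_prob_le_of_bad {X : Type*} [MeasurableSpace X]
    (μ : Measure X) [IsProbabilityMeasure μ]
    (c : X → Bool) (hc : Measurable c) (h : X → Bool) (hh : Measurable h)
    (ε : ℝ) (hε0 : 0 ≤ ε) (hε1 : ε ≤ 1) (m : ℕ)
    (hbad : ε ≤ trueErr μ c h) :
    ((Measure.pi fun _ : Fin m => μ)
        {s : Fin m → X | ∀ i : Fin m, h (s i) = c (s i)}).toReal ≤ (1 - ε) ^ m :=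
  consistent_prob_le_of_bad_general μ c hc h hh ε m hbad
end
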